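/- Let θ be an involutive isometry of a Euclidean space preserving a root system Φ, with real roots Φ^re, imaginary roots Φ^im, Weyl vectors ρ^re, ρ^im of chosen positive systems, and Φ^c = {α ∈ Φ : (α, ρ^re) = (α, ρ^im) = 0}. Then Φ^c is a θ-invariant sub-root system of Φ satisfying Φ^c ∩ Φ^im = ∅ and Φ^c ∩ Φ^re = ∅. -/

import Mathlib

open RealInnerProductSpace

variable {V : Type*} [NormedAddCommGroup V] [InnerProductSpace ℝ V] [FiniteDimensional ℝ V]

/-- The reflection in the hyperplane orthogonal to `α`. -/
noncomputable def sRefl (α : V) : V ≃ₗᵢ[ℝ] V := Submodule.reflection (ℝ ∙ α)ᗮ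

/-- A reduced crystallographic root system in a real inner product space. -/
structure IsRootSystem (Ψ : Set V) : Prop where
  finite : Ψ.Finite
  ne_zero : ∀ α ∈ Ψ, α ≠ 0
  neg_mem : ∀ α ∈ Ψ, -α ∈ Ψ
  reduced : ∀ α ∈ Ψ, ∀ t : ℝ, t • α ∈ Ψ → t = 1 ∨ t = -1
  refl_mem : ∀ α ∈ Ψ, ∀ β ∈ Ψ, sRefl α β ∈ Ψ
  crystallographic : ∀ α ∈ Ψ, ∀ β ∈ Ψ, ∃ n : ℤ, 2 * ⟪β, α⟫ / ⟪α, α⟫ = (n : ℝ)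

/-- `P` is a system of positive roots for `Ψ`. -/
structure IsPositiveSystem (Ψ P : Set V) : Prop where
  subset : P ⊆ Ψ
  mem_or_neg_mem : ∀ α ∈ Ψ, α ∈ P ∨ -α ∈ P
  not_neg_mem : ∀ α ∈ P, -α ∉ P
  add_mem : ∀ α ∈ P, ∀ β ∈ P, α + β ∈ Ψ → α + β ∈ P

/-- `Pi` is a sub-root system of `Ψ`: closed under negation and under addition of roots. -/
def IsSubRootSystem (Ψ Pi : Set V) : Prop :=
  Pi ⊆ Ψ ∧ (∀ α ∈ Pi, -α ∈ Pi) ∧ ∀ α ∈ Pi, ∀ β ∈ Pi, α + β ∈ Ψ → α + β ∈ Pi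

/-- `Δ` is a base (system of simple roots) of `Ψ`. -/
structure IsBase (Ψ : Set V) (Δ : Finset V) : Prop where
  subset : ↑Δ ⊆ Ψ
  indep : LinearIndependent ℝ (fun α : Δ => (α : V))
  decomp : ∀ β ∈ Ψ, ∃ c : V → ℤ, β = ∑ α ∈ Δ, (c α : ℝ) • α ∧
    ((∀ α ∈ Δ, 0 ≤ c α) ∨ (∀ α ∈ Δ, c α ≤ 0))

/-- The Weyl group of `Ψ`: the subgroup of linear isometries generated by root reflections. -/
noncomputable def weylGroup (Ψ : Set V) : Subgroup (V ≃ₗᵢ[ℝ] V) :=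
  Subgroup.closure {g | ∃ α ∈ Ψ, g = sRefl α}

/-- `w` commutes with `θ` as a map on `V`. -/
def commutesWith (θ w : V ≃ₗᵢ[ℝ] V) : Prop := ∀ x : V, θ (w x) = w (θ x)

/-!
That `Φ^c` is a `θ`-stable sub-root system is formal: membership is cut out by two linear
equations, and `θ` is self-adjoint with `θ ρ^re = -ρ^re`, `θ ρ^im = ρ^im`.

For disjointness, note that `Φ^re` and `Φ^im` are root systems in their own right (a root system
meets every subspace in a root system), so it suffices that a Weyl vector pairs positively with
every positive root `α`. In `2 (α, ρ) = ∑_{β > 0} (α, β)` the terms of `β` and `s_α β` cancel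
whenever both are positive, and every other positive `β` has `(α, β) > 0`: otherwise `β` and
`-s_α β` would be positive roots with sum `-m α`, `m ≥ 1`, which is impossible by induction on
`m`, since adding `α` to whichever summand pairs negatively with `α` gives a positive root again.
-/

section

omit [FiniteDimensional ℝ V]

theorem sRefl_apply (α x : V) : sRefl α x = x - (2 * ⟪x, α⟫ / ⟪α, α⟫) • α := by
  rw [sRefl, Submodule.reflection_orthogonal_apply, Submodule.reflection_singleton_apply,
    real_inner_self_eq_norm_sq, real_inner_comm]
  simp only [RCLike.ofReal_real_eq_id, id_eq]
  module

theorem sRefl_sRefl (α x : V) : sRefl α (sRefl α x) = x :=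
  Submodule.reflection_reflection _ x

theorem sRefl_self (α : V) : sRefl α α = -α :=
  Submodule.reflection_orthogonalComplement_singleton_eq_neg α

theorem inner_sRefl_right (α x : V) : ⟪α, sRefl α x⟫ = -⟪α, x⟫ := by
  rw [← (sRefl α).inner_map_map, sRefl_self, sRefl_sRefl, inner_neg_left]

theorem sRefl_eq_self_of_inner_eq_zero {α x : V} (h : ⟪α, x⟫ = 0) : sRefl α x = x := by
  rw [sRefl_apply, real_inner_comm, h]
  simp

theorem IsRootSystem.inner_self_pos {Φ : Set V} (hΦ : IsRootSystem Φ) {α : V} (hα : α ∈ Φ) :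
    0 < ⟪α, α⟫ :=
  real_inner_self_pos.2 (hΦ.ne_zero α hα)

theorem IsRootSystem.inter_submodule {Φ : Set V} (hΦ : IsRootSystem Φ) (W : Submodule ℝ V) :
    IsRootSystem {α ∈ Φ | α ∈ W} where
  finite := hΦ.finite.sep _
  ne_zero α hα := hΦ.ne_zero α hα.1
  neg_mem α hα := ⟨hΦ.neg_mem α hα.1, W.neg_mem hα.2⟩
  reduced α hα t ht := hΦ.reduced α hα.1 t ht.1
  refl_mem α hα β hβ := ⟨hΦ.refl_mem α hα.1 β hβ.1, by
    rw [sRefl_apply]; exact W.sub_mem hβ.2 (W.smul_mem _ hα.2)⟩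
  crystallographic α hα β hβ := hΦ.crystallographic α hα.1 β hβ.1

theorem IsRootSystem.sep_apply_eq_smul {Φ : Set V} (hΦ : IsRootSystem Φ) (f : Module.End ℝ V)
    (c : ℝ) : IsRootSystem {α ∈ Φ | f α = c • α} := by
  simpa only [Module.End.mem_eigenspace_iff] using hΦ.inter_submodule (Module.End.eigenspace f c)

theorem IsRootSystem.inner_mul_inner_lt {Φ : Set V} (hΦ : IsRootSystem Φ) {α β : V}
    (hα : α ∈ Φ) (hβ : β ∈ Φ) (hne : β ≠ α) (hne' : β ≠ -α) :
    ⟪α, β⟫ * ⟪α, β⟫ < ⟪α, α⟫ * ⟪β, β⟫ := by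
  have hlt : |⟪α, β⟫| < ‖α‖ * ‖β‖ := by
    refine (abs_real_inner_le_norm α β).lt_of_ne fun h => ?_
    obtain ⟨r, -, rfl⟩ :=
      (norm_inner_eq_norm_iff (𝕜 := ℝ) (hΦ.ne_zero α hα) (hΦ.ne_zero β hβ)).1 h
    rcases hΦ.reduced α hα r hβ with rfl | rfl <;> simp_all
  rw [← abs_mul_abs_self, real_inner_self_eq_norm_mul_norm, real_inner_self_eq_norm_mul_norm]
  nlinarith [abs_nonneg ⟪α, β⟫]

theorem IsRootSystem.add_mem_of_inner_neg {Φ : Set V} (hΦ : IsRootSystem Φ) {α β : V}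
    (hα : α ∈ Φ) (hβ : β ∈ Φ) (hne : β ≠ -α) (hneg : ⟪α, β⟫ < 0) : β + α ∈ Φ := by
  have hαα := hΦ.inner_self_pos hα
  have hββ := hΦ.inner_self_pos hβ
  have hβα : ⟪β, α⟫ < 0 := by rwa [real_inner_comm]
  obtain ⟨n, hn⟩ := hΦ.crystallographic α hα β hβ
  obtain ⟨n', hn'⟩ := hΦ.crystallographic β hβ α hα
  have hn_neg : n < 0 := by
    have : (n : ℝ) < 0 := hn ▸ div_neg_of_neg_of_pos (by linarith) hαα
    exact_mod_cast this
  have hn'_neg : n' < 0 := by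
    have : (n' : ℝ) < 0 := hn' ▸ div_neg_of_neg_of_pos (by linarith) hββ
    exact_mod_cast this
  have hprod : n * n' < 4 := by
    have key := hΦ.inner_mul_inner_lt hα hβ (by rintro rfl; linarith) hne
    have : (n : ℝ) * n' < 4 := by
      rw [← hn, ← hn', div_mul_div_comm, div_lt_iff₀ (by positivity), real_inner_comm α β]
      linarith
    exact_mod_cast this
  obtain h | h : n = -1 ∨ n' = -1 := by
    by_contra! hc
    nlinarith [show n ≤ -2 by omega, show n' ≤ -2 by omega]
  · have := hΦ.refl_mem α hα β hβ
    rwa [sRefl_apply, hn, h, Int.cast_neg, Int.cast_one, neg_one_smul, sub_neg_eq_add] at this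
  · have := hΦ.refl_mem β hβ α hα
    rwa [sRefl_apply, hn', h, Int.cast_neg, Int.cast_one, neg_one_smul, sub_neg_eq_add,
      add_comm] at this

theorem IsPositiveSystem.add_ne_neg_smul {Ψ P : Set V} (hΨ : IsRootSystem Ψ)
    (hP : IsPositiveSystem Ψ P) {α : V} (hα : α ∈ P) (m : ℕ) :
    ∀ β ∈ P, ∀ γ ∈ P, β + γ ≠ -((m : ℝ) + 1) • α := by
  have hαΨ := hP.subset hα
  induction m with
  | zero =>
    intro β hβ γ hγ h
    rw [Nat.cast_zero, zero_add, neg_one_smul] at h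
    exact hP.not_neg_mem α hα (h ▸ hP.add_mem β hβ γ hγ (h ▸ hΨ.neg_mem α hαΨ))
  | succ m ih =>
    intro β hβ γ hγ h
    have hsum : ⟪α, β⟫ + ⟪α, γ⟫ < 0 := by
      rw [← inner_add_right, h, real_inner_smul_right]
      nlinarith [hΨ.inner_self_pos hαΨ, (m.cast_nonneg : (0 : ℝ) ≤ m)]
    wlog hβα : ⟪α, β⟫ < 0 generalizing β γ
    · exact this γ hγ β hβ (by rwa [add_comm]) (by linarith) (by linarith)
    have hβ_ne : β ≠ -α := fun h => hP.not_neg_mem α hα (h ▸ hβ)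
    have hβα_mem : β + α ∈ P :=
      hP.add_mem β hβ α hα (hΨ.add_mem_of_inner_neg hαΨ (hP.subset hβ) hβ_ne hβα)
    exact ih (β + α) hβα_mem γ hγ (by rw [add_right_comm, h]; push_cast; module)

theorem IsPositiveSystem.sRefl_mem_of_inner_neg {Ψ P : Set V} (hΨ : IsRootSystem Ψ)
    (hP : IsPositiveSystem Ψ P) {α β : V} (hα : α ∈ P) (hβ : β ∈ P) (hneg : ⟪α, β⟫ < 0) :
    sRefl α β ∈ P := by
  have hαΨ := hP.subset hα
  have hβΨ := hP.subset hβ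
  refine (hP.mem_or_neg_mem _ (hΨ.refl_mem α hαΨ β hβΨ)).resolve_right fun hs => ?_
  obtain ⟨n, hn⟩ := hΨ.crystallographic α hαΨ β hβΨ
  have hn_neg : n < 0 := by
    have : (n : ℝ) < 0 :=
      hn ▸ div_neg_of_neg_of_pos (by rw [real_inner_comm]; linarith) (hΨ.inner_self_pos hαΨ)
    exact_mod_cast this
  obtain ⟨m, rfl⟩ : ∃ m : ℕ, n = -(m + 1) := ⟨(-n - 1).toNat, by omega⟩
  refine hP.add_ne_neg_smul hΨ hα m β hβ _ hs ?_
  rw [sRefl_apply, hn]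
  push_cast
  module

theorem IsPositiveSystem.inner_pos_of_sRefl_notMem {Ψ P : Set V} (hΨ : IsRootSystem Ψ)
    (hP : IsPositiveSystem Ψ P) {α β : V} (hα : α ∈ P) (hβ : β ∈ P) (hs : sRefl α β ∉ P) :
    0 < ⟪α, β⟫ := by
  rcases lt_trichotomy ⟪α, β⟫ 0 with hneg | hzero | hpos
  · exact absurd (hP.sRefl_mem_of_inner_neg hΨ hα hβ hneg) hs
  · exact absurd (by rwa [sRefl_eq_self_of_inner_eq_zero hzero]) hs
  · exact hpos

theorem IsPositiveSystem.inner_sum_pos {Ψ : Set V} {P : Finset V} (hΨ : IsRootSystem Ψ)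
    (hP : IsPositiveSystem Ψ P) {α : V} (hα : α ∈ P) : 0 < ⟪α, ∑ β ∈ P, β⟫ := by
  classical
  rw [inner_sum, ← Finset.sum_filter_add_sum_filter_not P (fun β => sRefl α β ∈ P)]
  have hpaired : ∑ β ∈ P with sRefl α β ∈ P, ⟪α, β⟫ = 0 := by
    refine Finset.sum_involution (fun β _ => sRefl α β)
      (fun β _ => by rw [inner_sRefl_right, add_neg_cancel]) (fun β _ hne hfix => hne ?_)
      (fun β hβ => ?_) (fun β _ => sRefl_sRefl α β)
    · linarith [hfix ▸ inner_sRefl_right α β]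
    · rw [Finset.mem_filter] at hβ ⊢
      exact ⟨hβ.2, by rw [sRefl_sRefl]; exact hβ.1⟩
  rw [hpaired, zero_add]
  refine Finset.sum_pos (fun β hβ => ?_) ⟨α, ?_⟩
  · rw [Finset.mem_filter] at hβ
    exact hP.inner_pos_of_sRefl_notMem hΨ hα hβ.1 hβ.2
  · rw [Finset.mem_filter, sRefl_self]
    exact ⟨hα, hP.not_neg_mem α hα⟩

noncomputable def weylVector (P : Finset V) : V := (2⁻¹ : ℝ) • ∑ β ∈ P, β

theorem IsPositiveSystem.inner_weylVector_ne_zero {Ψ : Set V} {P : Finset V}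
    (hΨ : IsRootSystem Ψ) (hP : IsPositiveSystem Ψ P) {α : V} (hα : α ∈ Ψ) :
    ⟪α, weylVector P⟫ ≠ 0 := by
  rw [weylVector, real_inner_smul_right, mul_ne_zero_iff_left (by norm_num)]
  rcases hP.mem_or_neg_mem α hα with hpos | hneg
  · exact (hP.inner_sum_pos hΨ hpos).ne'
  · have := hP.inner_sum_pos hΨ hneg
    rw [inner_neg_left] at this
    linarith

theorem isSubRootSystem_sep_inner_eq_zero {Φ : Set V} (hΦ : IsRootSystem Φ) (u v : V) :
    IsSubRootSystem Φ {α ∈ Φ | ⟪α, u⟫ = 0 ∧ ⟪α, v⟫ = 0} :=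
  ⟨fun _ hα => hα.1,
    fun α ⟨hα, hu, hv⟩ => ⟨hΦ.neg_mem α hα, by simp [inner_neg_left, hu, hv]⟩,
    fun _ ⟨_, hu, hv⟩ _ ⟨_, hu', hv'⟩ hsum => ⟨hsum, by simp [inner_add_left, hu, hv, hu', hv']⟩⟩

end

/-- `Φ^c = {α ∈ Φ : (α, ρ^re) = (α, ρ^im) = 0}` is a `θ`-invariant sub-root system of `Φ`
containing no imaginary and no real roots. -/
theorem stmt10 (Φ : Set V) (hΦ : IsRootSystem Φ) (θ : V ≃ₗᵢ[ℝ] V)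
    (hinv : ∀ x, θ (θ x) = x) (hΦθ : ⇑θ '' Φ = Φ)
    (Pre Pim : Finset V)
    (hPre : IsPositiveSystem {α ∈ Φ | θ α = -α} ↑Pre)
    (hPim : IsPositiveSystem {α ∈ Φ | θ α = α} ↑Pim)
    (ρre ρim : V) (hρre : ρre = (2⁻¹ : ℝ) • ∑ β ∈ Pre, β)
    (hρim : ρim = (2⁻¹ : ℝ) • ∑ β ∈ Pim, β)
    (Φc : Set V) (hΦc : Φc = {α ∈ Φ | ⟪α, ρre⟫ = 0 ∧ ⟪α, ρim⟫ = 0}) :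
    IsSubRootSystem Φ Φc ∧ ⇑θ '' Φc = Φc ∧
      Φc ∩ {α ∈ Φ | θ α = α} = ∅ ∧ Φc ∩ {α ∈ Φ | θ α = -α} = ∅ := by
  have hΦre : IsRootSystem {α ∈ Φ | θ α = -α} := by
    simpa using hΦ.sep_apply_eq_smul (θ : V →ₗ[ℝ] V) (-1)
  have hΦim : IsRootSystem {α ∈ Φ | θ α = α} := by
    simpa using hΦ.sep_apply_eq_smul (θ : V →ₗ[ℝ] V) 1
  have hθ_symm (x y : V) : ⟪θ x, y⟫ = ⟪x, θ y⟫ := by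
    conv_rhs => rw [← θ.inner_map_map, hinv]
  have hθρre : θ ρre = -ρre := by
    rw [hρre, map_smul, map_sum, Finset.sum_congr rfl fun β hβ => (hPre.subset hβ).2,
      Finset.sum_neg_distrib, smul_neg]
  have hθρim : θ ρim = ρim := by
    rw [hρim, map_smul, map_sum, Finset.sum_congr rfl fun β hβ => (hPim.subset hβ).2]
  have hmaps : Set.MapsTo θ Φc Φc := by
    rw [hΦc]
    rintro α ⟨hα, hre, him⟩
    exact ⟨hΦθ ▸ Set.mem_image_of_mem θ hα, by rw [hθ_symm, hθρre, inner_neg_right, hre, neg_zero],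
      by rw [hθ_symm, hθρim, him]⟩
  subst hρre hρim hΦc
  refine ⟨isSubRootSystem_sep_inner_eq_zero hΦ _ _,
    hmaps.image_subset.antisymm fun α hα => ⟨θ α, hmaps hα, hinv α⟩, ?_, ?_⟩
  · exact Set.eq_empty_of_forall_notMem fun α ⟨⟨_, _, him⟩, hαim⟩ =>
      hPim.inner_weylVector_ne_zero hΦim hαim him
  · exact Set.eq_empty_of_forall_notMem fun α ⟨⟨_, hre, _⟩, hαre⟩ =>
      hPre.inner_weylVector_ne_zero hΦre hαre hre
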